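/- Let g be a finite-dimensional Lie algebra over a field k of characteristic 0 and let Unital(Mod_dg(g)) be the category of g-differential unital spaces. The functor Θ assigning to each object X its set of connections Θ(X) is representable, with representing object the Weil module M_g = k ⊕ g* ⊕ g*[1]: connections on X correspond bijectively and naturally to unital g-differential morphisms M_g → X. -/
import Mathlib


set_option linter.unusedSectionVars false
set_option linter.unreachableTactic false
set_option linter.unusedTactic false

/-- A `g`-differential space: a supercomplex (parity involution `par`, odd differential
`d`) with a `g`-action `rho` and odd contractions `iot`, satisfying `d² = 0`, `ι_x² = 0`,
the Cartan relation and the Lie compatibility relations. -/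
structure GDS (k g X : Type) [Field k] [LieRing g] [LieAlgebra k g]
    [AddCommGroup X] [Module k X] where
  par : X →ₗ[k] X
  par_par : ∀ a, par (par a) = a
  d : X →ₗ[k] X
  rho : g → X →ₗ[k] X
  iot : g → X →ₗ[k] X
  rho_add : ∀ x y a, rho (x + y) a = rho x a + rho y a
  rho_smul : ∀ (c : k) x a, rho (c • x) a = c • rho x a
  iot_add : ∀ x y a, iot (x + y) a = iot x a + iot y a
  iot_smul : ∀ (c : k) x a, iot (c • x) a = c • iot x a
  d_par : ∀ a, par (d a) = - d (par a)
  iot_par : ∀ x a, par (iot x a) = - iot x (par a)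
  rho_par : ∀ x a, par (rho x a) = rho x (par a)
  d_sq : ∀ a, d (d a) = 0
  iot_sq : ∀ x a, iot x (iot x a) = 0
  cartan : ∀ x a, d (iot x a) + iot x (d a) = rho x a
  rho_lie : ∀ x y a, rho ⁅x, y⁆ a = rho x (rho y a) - rho y (rho x a)
  iot_rho : ∀ x y a, rho x (iot y a) - iot y (rho x a) = iot ⁅x, y⁆ a

variable (k g : Type) [Field k] [CharZero k] [LieRing g] [LieAlgebra k g]

/-- The coadjoint action of `g` on `g*`. -/
def coad (x : g) (ξ : Module.Dual k g) : Module.Dual k g :=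
  -(ξ ∘ₗ (LieAlgebra.ad k g x))

/-- The underlying space of the Weil module `M_g = k ⊕ g* ⊕ g*[1]`. -/
abbrev Mw := k × Module.Dual k g × Module.Dual k g

@[simp] lemma coad_apply (x : g) (ξ : Module.Dual k g) (v : g) :
    coad k g x ξ v = - ξ ⁅x, v⁆ := by
  simp [coad, LieAlgebra.ad_apply]

lemma coad_add (x y : g) (ξ : Module.Dual k g) :
    coad k g (x + y) ξ = coad k g x ξ + coad k g y ξ := by
  ext v; simp [add_lie]; abel

lemma coad_smul (c : k) (x : g) (ξ : Module.Dual k g) :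
    coad k g (c • x) ξ = c • coad k g x ξ := by
  ext v; simp [smul_lie]

lemma coad_map_add (x : g) (ξ η : Module.Dual k g) :
    coad k g x (ξ + η) = coad k g x ξ + coad k g x η := by
  ext v; simp; abel

lemma coad_map_smul (x : g) (c : k) (ξ : Module.Dual k g) :
    coad k g x (c • ξ) = c • coad k g x ξ := by
  ext v; simp

lemma coad_map_neg (x : g) (ξ : Module.Dual k g) :
    coad k g x (-ξ) = - coad k g x ξ := by
  ext v; simp

@[simp] lemma coad_map_zero (x : g) : coad k g x (0 : Module.Dual k g) = 0 := by
  ext v; simp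

lemma coad_lie (x y : g) (ξ : Module.Dual k g) :
    coad k g ⁅x, y⁆ ξ = coad k g x (coad k g y ξ) - coad k g y (coad k g x ξ) := by
  ext v; simp [lie_lie]; try ring

/-- The `g`-differential space structure of the Weil module `M_g`: the differential sends
the copy `g*[1]` identically onto `g*`, the contraction `ι_x` pairs `g*[1]` with `x` into
`k` and maps `g*` into `g*[1]` by the coadjoint action, and `g` acts by the coadjoint
action on both copies of `g*`. -/
noncomputable def SM : GDS k g (Mw k g) where
  par := { toFun := fun m => (m.1, m.2.1, -m.2.2),
           map_add' := by intros; simp [Prod.ext_iff]; abel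
           map_smul' := by intros; simp [Prod.ext_iff] }
  par_par := by intros; simp [Prod.ext_iff]
  d := { toFun := fun m => (0, m.2.2, 0),
         map_add' := by intros; simp [Prod.ext_iff]
         map_smul' := by intros; simp [Prod.ext_iff] }
  rho x := { toFun := fun m => (0, coad k g x m.2.1, coad k g x m.2.2),
             map_add' := by intros; simp [Prod.ext_iff, coad_map_add]
             map_smul' := by intros; simp [Prod.ext_iff, coad_map_smul] }
  iot x := { toFun := fun m => (m.2.2 x, 0, coad k g x m.2.1),
             map_add' := by intros; simp [Prod.ext_iff, coad_map_add]
             map_smul' := by intros; simp [Prod.ext_iff, coad_map_smul] }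
  rho_add := by intros x y a; simp [Prod.ext_iff, coad_add]
  rho_smul := by intros c x a; simp [Prod.ext_iff, coad_smul]
  iot_add := by intros x y a; simp [Prod.ext_iff, coad_add]
  iot_smul := by intros c x a; simp [Prod.ext_iff, coad_smul]
  d_par := by intros; simp [Prod.ext_iff]
  iot_par := by
    intros x a
    simp only [Prod.ext_iff, Prod.fst_neg, Prod.snd_neg, LinearMap.coe_mk, AddHom.coe_mk]
    and_intros <;> first
      | exact (coad_map_neg k g x a.2.2).symm
      | simp
  rho_par := by
    intros x a
    simp only [Prod.ext_iff, Prod.fst_neg, Prod.snd_neg, LinearMap.coe_mk, AddHom.coe_mk]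
    and_intros <;> first
      | exact (coad_map_neg k g x a.2.2).symm
      | simp
  d_sq := by intros; simp [Prod.ext_iff]
  iot_sq := by intros x a; simp [Prod.ext_iff, coad_apply]
  cartan := by intros x a; simp [Prod.ext_iff]
  rho_lie := by intros x y a; simp [Prod.ext_iff, coad_lie]
  iot_rho := by intros x y a; simp [Prod.ext_iff, coad_lie, coad_apply]

/-- The unit of the Weil module `M_g`. -/
noncomputable def uM : k →ₗ[k] Mw k g where
  toFun a := (a, 0, 0)
  map_add' := by intros; simp [Prod.ext_iff]
  map_smul' := by intros; simp [Prod.ext_iff]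

/-- The inclusion of `g*` as the odd copy `g*[1] ⊆ M_g`. -/
noncomputable def inclOdd : Module.Dual k g →ₗ[k] Mw k g where
  toFun ξ := (0, 0, ξ)
  map_add' := by intros; simp [Prod.ext_iff]
  map_smul' := by intros; simp [Prod.ext_iff]

/-- A connection on a unital `g`-differential space `(X, u)`: an odd, `g`-equivariant
linear map `θ : g* → X` with `ι_x θ(ξ) = ξ(x) • u(1)`. -/
def IsConnection {X : Type} [AddCommGroup X] [Module k X]
    (SX : GDS k g X) (u : k →ₗ[k] X) (θ : Module.Dual k g →ₗ[k] X) : Prop :=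
  (∀ ξ, SX.par (θ ξ) = - θ ξ) ∧
  (∀ (x : g) (ξ), SX.iot x (θ ξ) = ξ x • u 1) ∧
  (∀ (x : g) (ξ), SX.rho x (θ ξ) = θ (coad k g x ξ))

/-- A unital morphism of unital `g`-differential spaces. -/
def IsUnitalGDSHom {X Y : Type} [AddCommGroup X] [Module k X] [AddCommGroup Y] [Module k Y]
    (SX : GDS k g X) (uX : k →ₗ[k] X) (SY : GDS k g Y) (uY : k →ₗ[k] Y)
    (f : X →ₗ[k] Y) : Prop :=
  (∀ a, f (SX.par a) = SY.par (f a)) ∧ (∀ a, f (SX.d a) = SY.d (f a)) ∧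
  (∀ (x : g) (a), f (SX.iot x a) = SY.iot x (f a)) ∧
  (∀ (x : g) (a), f (SX.rho x a) = SY.rho x (f a)) ∧
  (∀ c : k, f (uX c) = uY c)

/-- Let `g` be a finite-dimensional Lie algebra over a field `k` of
characteristic `0`.  The functor assigning to each unital `g`-differential space `X` its
set of connections is representable, with representing object the Weil module
`M_g = k ⊕ g* ⊕ g*[1]`: for every unital `g`-differential space `X`, restriction along the
inclusion `g*[1] → M_g` maps unital `g`-differential morphisms `M_g → X` to connections on
`X`, and every connection arises from a unique such morphism. -/
theorem stmt19 [Module.Finite k g]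
    (X : Type) [AddCommGroup X] [Module k X] (SX : GDS k g X) (u : k →ₗ[k] X)
    (hu : (∀ c, SX.par (u c) = u c) ∧ (∀ c, SX.d (u c) = 0) ∧
      (∀ (x : g) (c), SX.iot x (u c) = 0) ∧ (∀ (x : g) (c), SX.rho x (u c) = 0)) :
    (∀ f : Mw k g →ₗ[k] X, IsUnitalGDSHom k g (SM k g) (uM k g) SX u f →
      IsConnection k g SX u (f ∘ₗ inclOdd k g)) ∧
    (∀ θ : Module.Dual k g →ₗ[k] X, IsConnection k g SX u θ →
      ∃! f : Mw k g →ₗ[k] X,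
        IsUnitalGDSHom k g (SM k g) (uM k g) SX u f ∧ f ∘ₗ inclOdd k g = θ) := by
  obtain ⟨hpar, hd, hiot, hrho⟩ := hu
  have hu1 : ∀ c : k, u c = c • u 1 := by
    intro c; rw [← u.map_smul]; simp
  constructor
  · intro f ⟨fpar, fd, fiot, frho, fu⟩
    refine ⟨?_, ?_, ?_⟩
    · intro ξ
      have := fpar ((0 : k), (0 : Module.Dual k g), ξ)
      simp only [SM, inclOdd, LinearMap.coe_mk, AddHom.coe_mk, LinearMap.comp_apply] at *
      rw [← this, ← f.map_neg]; congr 1; simp [Prod.ext_iff]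
    · intro x ξ
      have := fiot x ((0 : k), (0 : Module.Dual k g), ξ)
      simp only [SM, inclOdd, LinearMap.coe_mk, AddHom.coe_mk, LinearMap.comp_apply] at *
      rw [← this]
      have h2 : ((ξ x, 0, coad k g x 0) : Mw k g) = ξ x • ((1:k), (0:Module.Dual k g), (0:Module.Dual k g)) := by
        simp [Prod.ext_iff]
      rw [h2, f.map_smul]
      have : ((1:k), (0:Module.Dual k g), (0:Module.Dual k g)) = uM k g 1 := by
        simp [uM]
      rw [this, fu]
    · intro x ξ
      have := frho x ((0 : k), (0 : Module.Dual k g), ξ)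
      simp only [SM, inclOdd, LinearMap.coe_mk, AddHom.coe_mk, LinearMap.comp_apply] at *
      rw [← this]; congr 1; simp [Prod.ext_iff]
  · intro θ ⟨cpar, ciot, crho⟩
    set f : Mw k g →ₗ[k] X :=
      { toFun := fun m => u m.1 + SX.d (θ m.2.1) + θ m.2.2
        map_add' := by intros a b; simp only [Prod.fst_add, Prod.snd_add, map_add]; abel
        map_smul' := by
          intros c a
          simp only [Prod.smul_fst, Prod.smul_snd, map_smul, RingHom.id_apply, smul_add] } with hf
    have hfapp : ∀ m : Mw k g, f m = u m.1 + SX.d (θ m.2.1) + θ m.2.2 := fun _ => rfl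
    have hdrho : ∀ (x : g) (a : X), SX.rho x (SX.d a) = SX.d (SX.rho x a) := by
      intro x a
      have h1 := SX.cartan x (SX.d a)
      have h2 := congrArg SX.d (SX.cartan x a)
      simp only [SX.d_sq, map_add, add_zero] at h1 h2 ⊢
      rw [← h1, ← h2]; simp [SX.d_sq]
    refine ⟨f, ⟨⟨?_, ?_, ?_, ?_, ?_⟩, ?_⟩, ?_⟩
    · intro a
      simp only [hfapp, SM, LinearMap.coe_mk, AddHom.coe_mk, map_add, hpar]
      have h1 : SX.par (SX.d (θ a.2.1)) = SX.d (θ a.2.1) := by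
        rw [SX.d_par, cpar, map_neg, neg_neg]
      rw [h1, cpar, map_neg]
    · intro a
      simp only [hfapp, SM, LinearMap.coe_mk, AddHom.coe_mk, map_add, hd, SX.d_sq,
        map_zero, zero_add, add_zero]
    · intro x a
      have h1 : SX.iot x (SX.d (θ a.2.1)) = θ (coad k g x a.2.1) := by
        have h := SX.cartan x (θ a.2.1)
        rw [ciot, crho] at h
        simpa [hd] using h
      simp only [hfapp, SM, LinearMap.coe_mk, AddHom.coe_mk, map_add, hiot, h1, ciot,
        map_zero, zero_add, add_zero]
      rw [hu1 (a.2.2 x)]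
      abel
    · intro x a
      simp only [hfapp, SM, LinearMap.coe_mk, AddHom.coe_mk, map_add, hrho]
      rw [hdrho, crho, crho]
      simp
    · intro c; simp [hfapp, uM, hd]
    · ext ξ; simp [hfapp, inclOdd, hd]
    · rintro f' ⟨⟨f'par, f'd, f'iot, f'rho, f'u⟩, hres⟩
      apply LinearMap.ext
      rintro ⟨a, ξ, η⟩
      have hsplit : ((a, ξ, η) : Mw k g) = uM k g a + (SM k g).d (0, 0, ξ) + inclOdd k g η := by
        simp [uM, SM, inclOdd, Prod.ext_iff]
      have hθ : ∀ ζ, f' (inclOdd k g ζ) = θ ζ := fun ζ => congrFun (congrArg DFunLike.coe hres) ζ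
      rw [hsplit, map_add, map_add, map_add, map_add, f'u, f'd, hθ]
      have : ((0,0,ξ) : Mw k g) = inclOdd k g ξ := by simp [inclOdd]
      rw [this, hθ]
      simp [hfapp, uM, SM, inclOdd, hd]
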